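/- Let S = {z ∈ ℂ : Re z ≥ 0, 0 ≤ Im z ≤ 1} and let f : S → ℂ be continuous, bounded, holomorphic on the interior of S, real-valued on {z ∈ S : Im z = 0} and on {z ∈ S : Im z = 1}, and purely imaginary on {z ∈ S : Re z = 0}. Then f is identically 0. -/

import Mathlib

/-!
On the boundary of the half-strip, `Im (f z ^ 2) = 2 Re (f z) Im (f z)` vanishes. A
Phragmén–Lindelöf argument (maximum modulus for `exp (±I f² - ε z)` on truncated rectangles,
then `ε → 0`) shows that the bounded harmonic function `Im (f²)` vanishes on the whole
half-strip. So `f²` is a real-valued holomorphic function, hence constant by the open mapping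
theorem, and it vanishes at the corner `0`.
-/

open Complex Set Filter Topology

theorem re_le_mul_re_of_halfStrip {h : ℂ → ℂ} {a b C ε : ℝ}
    (hd : DiffContOnCl ℂ h (Ioi 0 ×ℂ Ioo a b))
    (hC : ∀ w ∈ closure (Ioi 0 ×ℂ Ioo a b), (h w).re ≤ C)
    (hfr : ∀ w ∈ frontier (Ioi 0 ×ℂ Ioo a b), (h w).re ≤ 0)
    {z : ℂ} (hz : z ∈ closure (Ioi 0 ×ℂ Ioo a b)) (hε : 0 < ε) :
    (h z).re ≤ ε * z.re := by
  set U := Ioi (0 : ℝ) ×ℂ Ioo a b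
  have hUo : IsOpen U := isOpen_Ioi.reProdIm isOpen_Ioo
  have hre_nonneg : closure U ⊆ {w | 0 ≤ w.re} :=
    closure_minimal (fun _ hw => show (0 : ℝ) ≤ _ from hw.1.le)
      (isClosed_le continuous_const continuous_re)
  -- On the far edge `Re w = R` of the truncated strip, the factor `exp (-ε w)` beats the bound `C`.
  obtain ⟨R, hzR, hCR⟩ : ∃ R, z.re < R ∧ C < ε * R := by
    refine ⟨max z.re (C / ε) + 1, by linarith [le_max_left z.re (C / ε)], ?_⟩
    have : C / ε < max z.re (C / ε) + 1 := by linarith [le_max_right z.re (C / ε)]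
    rwa [div_lt_iff₀' hε] at this
  set V := re ⁻¹' Iio R ∩ U
  have hRo : IsOpen (re ⁻¹' Iio R) := isOpen_Iio.preimage continuous_re
  have hVo : IsOpen V := hRo.inter hUo
  have hVb : Bornology.IsBounded V :=
    (Metric.isBounded_Ioo 0 R |>.reProdIm (Metric.isBounded_Ioo a b)).subset
      fun w hw => ⟨⟨hw.2.1, hw.1⟩, hw.2.2⟩
  have hg : DiffContOnCl ℂ (fun w => h w - ε * w) V :=
    (hd.mono inter_subset_right).sub (differentiable_id.const_mul _).diffContOnCl
  have hF : DiffContOnCl ℂ (fun w => exp (h w - ε * w)) V :=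
    ⟨hg.differentiableOn.cexp, hg.continuousOn.cexp⟩
  have hnorm : ∀ w, ‖exp (h w - ε * w)‖ ≤ 1 ↔ (h w).re ≤ ε * w.re := fun w => by
    rw [norm_exp, Real.exp_le_one_iff, sub_re, re_ofReal_mul, sub_nonpos]
  refine (hnorm z).1 (norm_le_of_forall_mem_frontier_norm_le hVb hF (fun w hw => ?_) ?_)
  · have hwU : w ∈ closure U := closure_mono inter_subset_right hw.1
    rw [hnorm]
    by_cases hwU' : w ∈ U
    · have hRw : R ≤ w.re := by
        by_contra! hlt
        exact hw.2 (hVo.interior_eq.symm ▸ ⟨hlt, hwU'⟩)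
      linarith [hC w hwU, mul_le_mul_of_nonneg_left hRw hε.le]
    · have hwfr : w ∈ frontier U := ⟨hwU, hUo.interior_eq.symm ▸ hwU'⟩
      exact (hfr w hwfr).trans (mul_nonneg hε.le (hre_nonneg hwU))
  · exact hRo.inter_closure ⟨hzR, hz⟩

theorem re_nonpos_of_halfStrip {h : ℂ → ℂ} {a b C : ℝ}
    (hd : DiffContOnCl ℂ h (Ioi 0 ×ℂ Ioo a b))
    (hC : ∀ w ∈ closure (Ioi 0 ×ℂ Ioo a b), (h w).re ≤ C)
    (hfr : ∀ w ∈ frontier (Ioi 0 ×ℂ Ioo a b), (h w).re ≤ 0)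
    {z : ℂ} (hz : z ∈ closure (Ioi 0 ×ℂ Ioo a b)) : (h z).re ≤ 0 := by
  have hlim : Tendsto (fun ε : ℝ => ε * z.re) (𝓝[>] 0) (𝓝 0) := by
    refine tendsto_nhdsWithin_of_tendsto_nhds ?_
    simpa using (continuous_id.mul_const z.re).tendsto 0
  exact ge_of_tendsto hlim (eventually_nhdsWithin_of_forall fun ε hε =>
    re_le_mul_re_of_halfStrip hd hC hfr hz hε)

theorem im_eq_zero_of_halfStrip {h : ℂ → ℂ} {a b C : ℝ}
    (hd : DiffContOnCl ℂ h (Ioi 0 ×ℂ Ioo a b))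
    (hC : ∀ w ∈ closure (Ioi 0 ×ℂ Ioo a b), ‖h w‖ ≤ C)
    (hfr : ∀ w ∈ frontier (Ioi 0 ×ℂ Ioo a b), (h w).im = 0)
    {z : ℂ} (hz : z ∈ closure (Ioi 0 ×ℂ Ioo a b)) : (h z).im = 0 := by
  have hbound : ∀ w ∈ closure (Ioi 0 ×ℂ Ioo a b), |(h w).im| ≤ C := fun w hw =>
    (abs_im_le_norm _).trans (hC w hw)
  apply le_antisymm
  · simpa using re_nonpos_of_halfStrip (hd.const_smul (-I)) (C := C)
      (fun w hw => by simpa using le_of_abs_le (hbound w hw)) (fun w hw => by simp [hfr w hw]) hz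
  · simpa using re_nonpos_of_halfStrip (hd.const_smul I) (C := C)
      (fun w hw => by simpa using neg_le.1 (neg_le_of_abs_le (hbound w hw)))
      (fun w hw => by simp [hfr w hw]) hz

theorem AnalyticOnNhd.exists_eqOn_const_of_im_eq_zero {g : ℂ → ℂ} {U : Set ℂ}
    (hg : AnalyticOnNhd ℂ g U) (hU : IsPreconnected U) (hUo : IsOpen U)
    (him : ∀ z ∈ U, (g z).im = 0) : ∃ w, EqOn g (fun _ => w) U := by
  refine (hg.is_constant_or_isOpen hU).elim id fun hopen => ⟨0, fun z hz => ?_⟩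
  have hsub : g '' U ⊆ interior (im ⁻¹' {0}) :=
    interior_maximal (image_subset_iff.2 him) (hopen U Subset.rfl hUo)
  rw [interior_preimage_im, interior_singleton, preimage_empty] at hsub
  exact (hsub (mem_image_of_mem g hz)).elim

theorem sq_im_eq_zero_of_re_mul_im_eq_zero {w : ℂ} (h : w.re * w.im = 0) : (w ^ 2).im = 0 := by
  rw [sq, mul_im, mul_comm w.im, h, add_zero]

/-- Let `S = {z : Re z ≥ 0, 0 ≤ Im z ≤ 1}` and let `f` be continuous and bounded on `S`,
holomorphic on the interior of `S`, real-valued on the horizontal boundary pieces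
`Im z = 0` and `Im z = 1`, and purely imaginary on the vertical boundary `Re z = 0`.
Then `f` vanishes identically on `S`. -/
theorem stmt6 (f : ℂ → ℂ) (C : ℝ)
    (S : Set ℂ) (hS : S = {z | 0 ≤ z.re ∧ 0 ≤ z.im ∧ z.im ≤ 1})
    (hcont : ContinuousOn f S)
    (hbdd : ∀ z ∈ S, ‖f z‖ ≤ C)
    (hholo : DifferentiableOn ℂ f {z | 0 < z.re ∧ 0 < z.im ∧ z.im < 1})
    (hreal0 : ∀ z ∈ S, z.im = 0 → (f z).im = 0)
    (hreal1 : ∀ z ∈ S, z.im = 1 → (f z).im = 0)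
    (himag : ∀ z ∈ S, z.re = 0 → (f z).re = 0) :
    ∀ z ∈ S, f z = 0 := by
  set U := Ioi (0 : ℝ) ×ℂ Ioo 0 1
  have hUo : IsOpen U := isOpen_Ioi.reProdIm isOpen_Ioo
  have hSU : S = closure U := by
    rw [hS, closure_reProdIm, closure_Ioi, closure_Ioo zero_ne_one]; rfl
  have h0 : (0 : ℂ) ∈ S := by simp [hS]
  subst hSU
  have hd : DiffContOnCl ℂ (fun z => f z ^ 2) U := ⟨hholo.pow 2, hcont.pow 2⟩
  have hfr : ∀ z ∈ frontier U, (f z ^ 2).im = 0 := by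
    intro z hz
    have hzS := frontier_subset_closure hz
    rw [frontier_reProdIm, frontier_Ioo zero_lt_one, frontier_Ioi] at hz
    apply sq_im_eq_zero_of_re_mul_im_eq_zero
    rcases hz with ⟨-, h0 | h1⟩ | ⟨h0, -⟩
    · rw [hreal0 z hzS h0, mul_zero]
    · rw [hreal1 z hzS h1, mul_zero]
    · rw [himag z hzS h0, zero_mul]
  have hbound : ∀ z ∈ closure U, ‖f z ^ 2‖ ≤ C ^ 2 := fun z hz =>
    (norm_pow _ _).trans_le (pow_le_pow_left₀ (norm_nonneg _) (hbdd z hz) 2)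
  obtain ⟨w, hw⟩ := (hd.differentiableOn.analyticOnNhd hUo).exists_eqOn_const_of_im_eq_zero
    (((convex_Ioi 0).linear_preimage reLm).inter
      ((convex_Ioo 0 1).linear_preimage imLm)).isPreconnected hUo
    fun z hz => im_eq_zero_of_halfStrip hd hbound hfr (subset_closure hz)
  have hwcl : EqOn (fun z => f z ^ 2) (fun _ => w) (closure U) :=
    hw.of_subset_closure hd.continuousOn continuousOn_const subset_closure Subset.rfl
  have hf0 : f 0 = 0 := ext (himag 0 h0 rfl) (hreal0 0 h0 rfl)
  intro z hz
  simpa [hf0] using (hwcl hz).trans (hwcl h0).symm
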